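/- Let cohA be the total relation on Bool (cohA x y := True) and cohB be equality on Bool (cohB x y := x = y). There is no bijection φ : Bool × Bool → Bool × Bool such that for all p, q : Bool × Bool, cohBef cohA cohB p q ↔ cohBef cohB cohA (φ p) (φ q). (Non-commutativity of the 'before' connective: A ◁ B need not be isomorphic to B ◁ A.) -/
import Mathlib


/-- Strict coherence of the "before" connective on the product of two webs. -/
def scohBef {M N : Type*} (cohA : M → M → Prop) (cohB : N → N → Prop)
    (p q : M × N) : Prop :=
  (cohA p.1 q.1 ∧ p.1 ≠ q.1) ∨ (p.1 = q.1 ∧ cohB p.2 q.2 ∧ p.2 ≠ q.2)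

/-- Coherence of the "before" connective on the product of two webs. -/
def cohBef {M N : Type*} (cohA : M → M → Prop) (cohB : N → N → Prop)
    (p q : M × N) : Prop :=
  p = q ∨ scohBef cohA cohB p q

/-- Non-commutativity of "before": with `A` the two-token coherent space and `B` the
two-token incoherent space, `A ◁ B` is not isomorphic to `B ◁ A`. -/
theorem before_not_commutative :
    ¬ ∃ φ : Bool × Bool → Bool × Bool, Function.Bijective φ ∧
        ∀ p q : Bool × Bool,
          cohBef (fun (_ _ : Bool) => True) (fun (x y : Bool) => x = y) p q ↔
            cohBef (fun (x y : Bool) => x = y) (fun (_ _ : Bool) => True) (φ p) (φ q) := by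
  rintro ⟨φ, ⟨hinj, -⟩, h⟩
  have key : ∀ x y z : Bool × Bool, x ≠ y → x ≠ z → y ≠ z →
      ¬ (cohBef (fun (x y : Bool) => x = y) (fun (_ _ : Bool) => True) x y ∧
         cohBef (fun (x y : Bool) => x = y) (fun (_ _ : Bool) => True) x z) := by
    simp [cohBef, scohBef, Prod.ext_iff]
  have h1 := (h (true, true) (false, true)).mp (Or.inr (Or.inl ⟨trivial, by simp⟩))
  have h2 := (h (true, true) (false, false)).mp (Or.inr (Or.inl ⟨trivial, by simp⟩))
  exact key _ _ _ (fun e => by simpa using hinj e) (fun e => by simpa using hinj e)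
    (fun e => by simpa using hinj e) ⟨h1, h2⟩
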